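/- Let G = ⟨v, h ∣ v² = 1, (vh)² = 1⟩ be the infinite dihedral group and let φ : G → ℤ/2ℤ be the homomorphism with φ(v) = 0 and φ(h) = 1. Then the kernel of φ is the subgroup generated by v and h², and this kernel is isomorphic to G itself (i.e., to ℤ/2ℤ * ℤ/2ℤ). -/

import Mathlib

/-!
Write `v, h` for the generators. From `v² = 1` and `(vh)² = 1` one gets `v hⁿ v = h⁻ⁿ`, so every
element is `hⁿ` or `hⁿ v`, and `φ(hⁿ) = φ(hⁿ v) = n mod 2`; hence the kernel consists of the
`h²ᵐ` and `h²ᵐ v`, which is `⟨v, h²⟩`. Since `v` and `h²` satisfy the defining relations again,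
`v ↦ v, h ↦ h²` is an endomorphism with image `⟨v, h²⟩`; it is injective because `v ↦ sr 0, h ↦ r 1`
maps the normal forms `hⁿ, hⁿ v` to distinct elements of Mathlib's `DihedralGroup 0`.
-/

/-- Relators for the infinite dihedral group ⟨v, h ∣ v², (vh)²⟩, with
`true ↦ v` and `false ↦ h`. -/
def dihedralRels : Set (FreeGroup Bool) :=
  {FreeGroup.of true ^ 2, (FreeGroup.of true * FreeGroup.of false) ^ 2}

section Involution

variable {H : Type*} [Group H] {a b : H}

theorem mul_zpow_eq_zpow_neg_mul (ha : a ^ 2 = 1) (hab : (a * b) ^ 2 = 1) (n : ℤ) :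
    a * b ^ n = b ^ (-n) * a := by
  have ha_inv : a⁻¹ = a := inv_eq_of_mul_eq_one_right (by rwa [← sq])
  have hconj : a * b * a⁻¹ = b⁻¹ := by
    rw [ha_inv, eq_inv_iff_mul_eq_one, mul_assoc, ← sq, hab]
  rw [← mul_inv_eq_iff_eq_mul, ← conj_zpow, hconj, inv_zpow']

theorem sq_mul_zpow_eq_one (ha : a ^ 2 = 1) (hab : (a * b) ^ 2 = 1) (n : ℤ) :
    (a * b ^ n) ^ 2 = 1 := by
  nth_rw 1 [sq, mul_zpow_eq_zpow_neg_mul ha hab]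
  rw [mul_assoc, ← mul_assoc a, ← sq, ha, one_mul, ← zpow_add, neg_add_cancel, zpow_zero]

end Involution

namespace InfiniteDihedral

abbrev G := PresentedGroup dihedralRels

abbrev v : G := PresentedGroup.of true

abbrev h : G := PresentedGroup.of false

section Lift

variable {H : Type*} [Group H] {a b : H}

theorem lift_rels_eq_one (ha : a ^ 2 = 1) (hab : (a * b) ^ 2 = 1) :
    ∀ r ∈ dihedralRels, FreeGroup.lift (fun x : Bool => if x then a else b) r = 1 := by
  rintro r (rfl | rfl) <;> simpa

def lift (ha : a ^ 2 = 1) (hab : (a * b) ^ 2 = 1) : G →* H :=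
  PresentedGroup.toGroup (lift_rels_eq_one ha hab)

theorem lift_v (ha : a ^ 2 = 1) (hab : (a * b) ^ 2 = 1) : lift ha hab v = a :=
  PresentedGroup.toGroup.of _

theorem lift_h (ha : a ^ 2 = 1) (hab : (a * b) ^ 2 = 1) : lift ha hab h = b :=
  PresentedGroup.toGroup.of _

end Lift

theorem v_sq : v ^ 2 = 1 :=
  PresentedGroup.one_of_mem (Or.inl rfl)

theorem v_mul_h_sq : (v * h) ^ 2 = 1 :=
  PresentedGroup.one_of_mem (Or.inr rfl)

theorem v_mul_h_zpow (n : ℤ) : v * h ^ n = h ^ (-n) * v :=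
  mul_zpow_eq_zpow_neg_mul v_sq v_mul_h_sq n

theorem exists_eq_zpow_or_eq_zpow_mul_v (g : G) : ∃ n : ℤ, g = h ^ n ∨ g = h ^ n * v := by
  have hg : g ∈ Subgroup.closure (Set.range (PresentedGroup.of : Bool → G)) := by
    rw [PresentedGroup.closure_range_of]
    exact Subgroup.mem_top g
  induction hg using Subgroup.closure_induction with
  | mem x hx =>
    obtain ⟨_ | _, rfl⟩ := hx
    · exact ⟨1, .inl (zpow_one h).symm⟩
    · exact ⟨0, .inr (by rw [zpow_zero, one_mul])⟩
  | one => exact ⟨0, .inl (zpow_zero h).symm⟩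
  | mul x y _ _ hx hy =>
    obtain ⟨n, rfl | rfl⟩ := hx <;> obtain ⟨m, rfl | rfl⟩ := hy
    · exact ⟨n + m, .inl (zpow_add h n m).symm⟩
    · exact ⟨n + m, .inr (by rw [← mul_assoc, ← zpow_add])⟩
    · refine ⟨n - m, .inr ?_⟩
      rw [mul_assoc, v_mul_h_zpow, ← mul_assoc, ← zpow_add, sub_eq_add_neg]
    · refine ⟨n - m, .inl ?_⟩
      rw [mul_assoc, ← mul_assoc v, v_mul_h_zpow, mul_assoc, ← sq, v_sq, mul_one, ← zpow_add,
        sub_eq_add_neg]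
  | inv x _ hx =>
    obtain ⟨n, rfl | rfl⟩ := hx
    · exact ⟨-n, .inl (zpow_neg h n).symm⟩
    · refine ⟨n, .inr ?_⟩
      rw [mul_inv_rev, inv_eq_of_mul_eq_one_right (by rw [← sq, v_sq]), ← zpow_neg, v_mul_h_zpow,
        neg_neg]

def toDihedralGroup : G →* DihedralGroup 0 :=
  lift (a := DihedralGroup.sr 0) (b := DihedralGroup.r 1) (by simp [sq]) (by simp [sq])

theorem toDihedralGroup_zpow_h (n : ℤ) :
    toDihedralGroup (h ^ n) = DihedralGroup.r (Int.cast n) := by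
  rw [map_zpow, toDihedralGroup, lift_h, DihedralGroup.r_one_zpow]

theorem zpow_h_eq_one_iff {n : ℤ} : h ^ n = 1 ↔ n = 0 := by
  refine ⟨fun hn => ?_, fun hn => by rw [hn, zpow_zero]⟩
  have := congrArg toDihedralGroup hn
  rw [toDihedralGroup_zpow_h, map_one, DihedralGroup.one_def, DihedralGroup.r.injEq] at this
  exact this

theorem zpow_h_mul_v_ne_one (n : ℤ) : h ^ n * v ≠ 1 := fun hn => by
  have := congrArg toDihedralGroup hn
  rw [map_mul, toDihedralGroup_zpow_h, toDihedralGroup, lift_v, map_one,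
    DihedralGroup.r_mul_sr, DihedralGroup.one_def] at this
  cases this

def squareH : G →* G :=
  lift (b := h ^ 2) v_sq (by simpa using sq_mul_zpow_eq_one v_sq v_mul_h_sq 2)

theorem squareH_zpow_h (n : ℤ) : squareH (h ^ n) = h ^ (2 * n) := by
  rw [map_zpow, squareH, lift_h, ← zpow_natCast, ← zpow_mul, Nat.cast_ofNat]

theorem squareH_injective : Function.Injective squareH := by
  rw [injective_iff_map_eq_one]
  intro g hg
  obtain ⟨n, rfl | rfl⟩ := exists_eq_zpow_or_eq_zpow_mul_v g
  · rw [squareH_zpow_h, zpow_h_eq_one_iff] at hg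
    rw [zpow_h_eq_one_iff]
    omega
  · rw [map_mul, squareH_zpow_h, squareH, lift_v] at hg
    exact absurd hg (zpow_h_mul_v_ne_one _)

theorem range_squareH : squareH.range = Subgroup.closure {v, h ^ 2} := by
  rw [MonoidHom.range_eq_map, ← PresentedGroup.closure_range_of, MonoidHom.map_closure,
    Bool.range_eq, Set.image_pair, squareH, lift_v, lift_h, Set.pair_comm]

theorem zpow_h_mem_closure_of_even {n : ℤ} (hn : Even n) :
    h ^ n ∈ Subgroup.closure ({v, h ^ 2} : Set G) := by
  obtain ⟨m, rfl⟩ := hn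
  rw [← two_mul, zpow_mul]
  exact Subgroup.zpow_mem _ (Subgroup.subset_closure (.inr rfl)) m

theorem ker_eq_closure (φ : G →* Multiplicative (ZMod 2))
    (hv : φ v = Multiplicative.ofAdd 0) (hh : φ h = Multiplicative.ofAdd 1) :
    φ.ker = Subgroup.closure {v, h ^ 2} := by
  have hφ (n : ℤ) : φ (h ^ n) = Multiplicative.ofAdd (n : ZMod 2) := by
    rw [map_zpow, hh, ← ofAdd_zsmul, zsmul_one]
  have h_even {n : ℤ} (hn : φ (h ^ n) = 1) : Even n := by
    rwa [hφ, ofAdd_eq_one, ZMod.intCast_eq_zero_iff_even] at hn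
  refine le_antisymm (fun g hg => ?_) ((Subgroup.closure_le _).mpr ?_)
  · rw [MonoidHom.mem_ker] at hg
    obtain ⟨n, rfl | rfl⟩ := exists_eq_zpow_or_eq_zpow_mul_v g
    · exact zpow_h_mem_closure_of_even (h_even hg)
    · rw [map_mul, hv, ofAdd_zero, mul_one] at hg
      exact Subgroup.mul_mem _ (zpow_h_mem_closure_of_even (h_even hg))
        (Subgroup.subset_closure (.inl rfl))
  · rintro _ (rfl | rfl)
    · exact hv
    · rw [SetLike.mem_coe, MonoidHom.mem_ker, ← zpow_natCast, hφ]
      rfl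

end InfiniteDihedral

open InfiniteDihedral in
/-- If φ : ⟨v, h ∣ v², (vh)²⟩ → ℤ/2 satisfies φ(v) = 0, φ(h) = 1, then
ker φ = ⟨v, h²⟩ and ker φ is isomorphic to the group itself. -/
theorem stmt4 (φ : PresentedGroup dihedralRels →* Multiplicative (ZMod 2))
    (hv : φ (PresentedGroup.of true) = Multiplicative.ofAdd 0)
    (hh : φ (PresentedGroup.of false) = Multiplicative.ofAdd 1) :
    φ.ker = Subgroup.closure
        {PresentedGroup.of true, PresentedGroup.of false ^ 2} ∧
      Nonempty (φ.ker ≃* PresentedGroup dihedralRels) := by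
  have hker := ker_eq_closure φ hv hh
  refine ⟨hker, ⟨?_⟩⟩
  rw [hker, ← range_squareH]
  exact (MonoidHom.ofInjective squareH_injective).symm
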